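/- arXiv:0902.2054 — 3 statements merged into one kernel-verified Lean document; each statement's English description precedes it below -/
import Mathlib

section
/- For n ≥ 3 and x ∈ ℝⁿ with x ≠ 0, the Newton (harmonic) potential of the Gaussian satisfies (Γ(n/2−1)/(4π^{n/2})) ∫_{ℝⁿ} e^{−|y|²} / |x−y|^{n−2} dy = (1/(4|x|^{n−2})) · γ(n/2 − 1, |x|²), where γ is the lower incomplete Gamma function. -/
/-!
Write `a = n/2 - 1`, so that `|x - y|^(n-2) = (|x - y|²)^a`, and use the subordination identity
`Γ(a) / r^a = ∫₀^∞ s^(a-1) e^(-r s) ds`. After exchanging the two integrals (Tonelli), the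
integral over `y` is a shifted Gaussian: completing the square,
`s |x - y|² + |y|² = (1 + s) |y - s x / (1 + s)|² + s |x|² / (1 + s)`,
so it equals `(π / (1 + s))^(n/2) e^(-s |x|² / (1 + s))`. The substitution `τ = |x|² s / (1 + s)`,
which maps `(0, ∞)` onto `(0, |x|²)`, turns the remaining integral over `s` into
`π^(n/2) |x|^(2-n) γ(a, |x|²)`.
-/

open Real MeasureTheory

/-- The lower incomplete Gamma function `γ(a, x) = ∫_0^x τ^(a-1) e^(-τ) dτ`. -/
noncomputable def lowerGamma (a x : ℝ) : ℝ :=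
  ∫ τ in (0:ℝ)..x, τ ^ (a - 1) * Real.exp (-τ)

open Set Function

section Tonelli

variable {α β : Type*} [MeasurableSpace α] [MeasurableSpace β]
  {μ : Measure α} {ν : Measure β} [SFinite ν]

theorem integral_integral_eq_toReal_lintegral_prod_of_nonneg {F : α → β → ℝ}
    (hF : AEStronglyMeasurable (uncurry F) (μ.prod ν)) (hF₀ : 0 ≤ᵐ[μ.prod ν] uncurry F)
    (hμ : ∀ᵐ a ∂μ, Integrable (F a) ν) :
    ∫ a, ∫ b, F a b ∂ν ∂μ = (∫⁻ p, ENNReal.ofReal (uncurry F p) ∂μ.prod ν).toReal := by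
  have hF₀' : ∀ᵐ a ∂μ, ∀ᵐ b ∂ν, 0 ≤ F a b := Measure.ae_ae_of_ae_prod hF₀
  have hm : AEStronglyMeasurable (fun a ↦ ∫ b, F a b ∂ν) μ := hF.integral_prod_right'
  rw [lintegral_prod _ hF.aemeasurable.ennreal_ofReal,
    integral_eq_lintegral_of_nonneg_ae ?_ hm]
  · congr 1
    refine lintegral_congr_ae ?_
    filter_upwards [hμ, hF₀'] with a ha ha₀
    exact ofReal_integral_eq_lintegral_ofReal ha ha₀
  · filter_upwards [hF₀'] with a ha₀
    exact integral_nonneg_of_ae ha₀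

theorem integral_integral_swap_of_nonneg [SFinite μ] {F : α → β → ℝ}
    (hF : AEStronglyMeasurable (uncurry F) (μ.prod ν)) (hF₀ : 0 ≤ᵐ[μ.prod ν] uncurry F)
    (hμ : ∀ᵐ a ∂μ, Integrable (F a) ν) (hν : ∀ᵐ b ∂ν, Integrable (fun a ↦ F a b) μ) :
    ∫ a, ∫ b, F a b ∂ν ∂μ = ∫ b, ∫ a, F a b ∂μ ∂ν := by
  rw [integral_integral_eq_toReal_lintegral_prod_of_nonneg hF hF₀ hμ,
    integral_integral_eq_toReal_lintegral_prod_of_nonneg (F := fun b a ↦ F a b)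
      hF.prod_swap (Measure.measurePreserving_swap.quasiMeasurePreserving.ae hF₀) hν]
  exact congrArg ENNReal.toReal (lintegral_prod_swap _).symm

end Tonelli

section Substitution

variable {R : ℝ}

theorem image_mul_div_one_add_Ioi (hR : 0 < R) :
    (fun s : ℝ ↦ R * s / (1 + s)) '' Ioi 0 = Ioo 0 R := by
  ext τ
  constructor
  · rintro ⟨s, hs : 0 < s, rfl⟩
    exact ⟨by positivity, by rw [div_lt_iff₀ (by positivity)]; nlinarith⟩
  · rintro ⟨hτ₀, hτR⟩
    refine ⟨τ / (R - τ), div_pos hτ₀ (sub_pos.2 hτR), ?_⟩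
    have : R - τ ≠ 0 := (sub_pos.2 hτR).ne'
    field_simp
    ring

theorem strictMonoOn_mul_div_one_add (hR : 0 < R) :
    StrictMonoOn (fun s : ℝ ↦ R * s / (1 + s)) (Ioi 0) := by
  intro s (hs : 0 < s) t (ht : 0 < t) hst
  dsimp only
  rw [div_lt_div_iff₀ (by positivity) (by positivity)]
  nlinarith

theorem hasDerivAt_mul_div_one_add {s : ℝ} (hs : 1 + s ≠ 0) :
    HasDerivAt (fun s : ℝ ↦ R * s / (1 + s)) (R / (1 + s) ^ 2) s := by
  exact (((hasDerivAt_id' s).const_mul R).div ((hasDerivAt_id' s).const_add 1) hs).congr_deriv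
    (by ring)

theorem lowerGamma_eq_rpow_mul_integral_Ioi (a : ℝ) (hR : 0 < R) :
    lowerGamma a R =
      R ^ a * ∫ s in Ioi 0, s ^ (a - 1) / (1 + s) ^ (a + 1) * rexp (-(R * s / (1 + s))) := by
  rw [lowerGamma, intervalIntegral.integral_of_le hR.le, integral_Ioc_eq_integral_Ioo,
    ← image_mul_div_one_add_Ioi hR, integral_image_eq_integral_abs_deriv_smul measurableSet_Ioi
      (fun s (hs : 0 < s) ↦ (hasDerivAt_mul_div_one_add (by positivity)).hasDerivWithinAt)
      (strictMonoOn_mul_div_one_add hR).injOn, ← integral_const_mul]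
  refine setIntegral_congr_fun measurableSet_Ioi fun s (hs : 0 < s) ↦ ?_
  have h1s : 0 < 1 + s := by positivity
  rw [smul_eq_mul, abs_of_pos (by positivity), mul_div_assoc, mul_rpow hR.le (by positivity),
    div_rpow hs.le h1s.le, rpow_add h1s, rpow_sub_one hR.ne', rpow_sub_one h1s.ne', rpow_one]
  field_simp

end Substitution

section Gaussian

variable {V : Type*} [NormedAddCommGroup V] [InnerProductSpace ℝ V]

theorem norm_sub_sq_mul_add_norm_sq (x y : V) {s : ℝ} (hs : 1 + s ≠ 0) :
    ‖x - y‖ ^ 2 * s + ‖y‖ ^ 2 =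
      (1 + s) * ‖y - (s / (1 + s)) • x‖ ^ 2 + ‖x‖ ^ 2 * s / (1 + s) := by
  rw [norm_sub_sq_real, norm_sub_sq_real, real_inner_smul_right, real_inner_comm, norm_smul,
    Real.norm_eq_abs, mul_pow, sq_abs]
  field_simp
  ring

variable [FiniteDimensional ℝ V] [MeasurableSpace V] [BorelSpace V]

theorem integral_exp_neg_norm_sub_sq_mul_mul_exp_neg_norm_sq (x : V) {s : ℝ} (hs : 0 < 1 + s) :
    ∫ y, rexp (-(‖x - y‖ ^ 2 * s)) * rexp (-‖y‖ ^ 2) =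
      rexp (-(‖x‖ ^ 2 * s / (1 + s))) * (π / (1 + s)) ^ (Module.finrank ℝ V / 2 : ℝ) := by
  have hsq (y : V) : rexp (-(‖x - y‖ ^ 2 * s)) * rexp (-‖y‖ ^ 2) =
      rexp (-(‖x‖ ^ 2 * s / (1 + s))) * rexp (-(1 + s) * ‖y - (s / (1 + s)) • x‖ ^ 2) := by
    rw [← exp_add, ← exp_add]
    congr 1
    linarith [norm_sub_sq_mul_add_norm_sq x y hs.ne']
  simp_rw [hsq]
  rw [integral_const_mul, integral_sub_right_eq_self (fun y ↦ rexp (-(1 + s) * ‖y‖ ^ 2)),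
    GaussianFourier.integral_rexp_neg_mul_sq_norm hs]

theorem Gamma_mul_integral_exp_neg_norm_sq_div_rpow {a : ℝ} (ha : 0 < a)
    (hV : (Module.finrank ℝ V : ℝ) / 2 = a + 1) {x : V} (hx : x ≠ 0) :
    Gamma a * ∫ y, rexp (-‖y‖ ^ 2) / (‖x - y‖ ^ 2) ^ a =
      π ^ (a + 1) * lowerGamma a (‖x‖ ^ 2) / (‖x‖ ^ 2) ^ a := by
  have hR : 0 < ‖x‖ ^ 2 := by positivity
  have : Nontrivial V := Module.nontrivial_of_finrank_pos <| by
    exact_mod_cast (show (0 : ℝ) < Module.finrank ℝ V by linarith)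
  have hxy : ∀ᵐ y, 0 < ‖x - y‖ ^ 2 := by
    filter_upwards [volume.ae_ne x] with y hy
    have := sub_ne_zero.2 hy.symm
    positivity
  let F : V → ℝ → ℝ := fun y s ↦ s ^ (a - 1) * rexp (-(‖x - y‖ ^ 2 * s)) * rexp (-‖y‖ ^ 2)
  have hF_Ioi (y : V) (hr : 0 < ‖x - y‖ ^ 2) :
      ∫ s in Ioi 0, F y s = Gamma a * (rexp (-‖y‖ ^ 2) / (‖x - y‖ ^ 2) ^ a) := by
    rw [integral_mul_const, integral_rpow_mul_exp_neg_mul_Ioi ha hr, one_div, inv_rpow hr.le]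
    ring
  have hF_space (s : ℝ) (hs : 0 < s) : ∫ y, F y s =
      π ^ (a + 1) * (s ^ (a - 1) / (1 + s) ^ (a + 1) * rexp (-(‖x‖ ^ 2 * s / (1 + s)))) := by
    have h1s : 0 < 1 + s := by positivity
    simp only [F, mul_assoc]
    rw [integral_const_mul, integral_exp_neg_norm_sub_sq_mul_mul_exp_neg_norm_sq x h1s, hV,
      div_rpow pi_pos.le h1s.le]
    field_simp
  have hswap : ∫ y, ∫ s in Ioi 0, F y s = ∫ s in Ioi 0, ∫ y, F y s := by
    refine integral_integral_swap_of_nonneg (by fun_prop) ?_ ?_ ?_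
    · filter_upwards [Measure.quasiMeasurePreserving_snd.ae (ae_restrict_mem measurableSet_Ioi)]
        with p (hp : 0 < p.2)
      simp only [uncurry, F, Pi.zero_apply]
      positivity
    · filter_upwards [hxy] with y hr
      refine .of_integral_ne_zero ?_
      rw [hF_Ioi y hr]
      exact (mul_pos (Gamma_pos_of_pos ha) (div_pos (exp_pos _) (rpow_pos_of_pos hr a))).ne'
    · filter_upwards [ae_restrict_mem measurableSet_Ioi] with s (hs : 0 < s)
      refine .of_integral_ne_zero ?_
      rw [hF_space s hs]
      positivity
  calc Gamma a * ∫ y, rexp (-‖y‖ ^ 2) / (‖x - y‖ ^ 2) ^ a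
      = ∫ y, ∫ s in Ioi 0, F y s := by
        rw [← integral_const_mul]
        exact integral_congr_ae (hxy.mono fun y hr ↦ (hF_Ioi y hr).symm)
    _ = ∫ s in Ioi 0, π ^ (a + 1) *
          (s ^ (a - 1) / (1 + s) ^ (a + 1) * rexp (-(‖x‖ ^ 2 * s / (1 + s)))) := by
        rw [hswap]
        exact setIntegral_congr_fun measurableSet_Ioi hF_space
    _ = π ^ (a + 1) * lowerGamma a (‖x‖ ^ 2) / (‖x‖ ^ 2) ^ a := by
        rw [integral_const_mul, lowerGamma_eq_rpow_mul_integral_Ioi a hR, mul_div_assoc,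
          mul_div_cancel_left₀ _ (rpow_pos_of_pos hR a).ne']

end Gaussian

/-- The harmonic (Newton) potential of the Gaussian `e^(-|y|²)` in ℝⁿ, n ≥ 3. -/
theorem harmonic_potential_of_gaussian (n : ℕ) (hn : 3 ≤ n)
    (x : EuclideanSpace ℝ (Fin n)) (hx : x ≠ 0) :
    (Real.Gamma ((n : ℝ) / 2 - 1) / (4 * π ^ ((n : ℝ) / 2))) *
        ∫ y : EuclideanSpace ℝ (Fin n), Real.exp (-‖y‖ ^ 2) / ‖x - y‖ ^ (n - 2) =
      (1 / (4 * ‖x‖ ^ (n - 2))) * lowerGamma ((n : ℝ) / 2 - 1) (‖x‖ ^ 2) := by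
  set a : ℝ := (n : ℝ) / 2 - 1
  have hn' : (3 : ℝ) ≤ n := by exact_mod_cast hn
  have ha : 0 < a := by simp only [a]; linarith
  have hdim : (n : ℝ) / 2 = a + 1 := by ring
  have hpow (v : EuclideanSpace ℝ (Fin n)) : (‖v‖ ^ 2) ^ a = ‖v‖ ^ (n - 2) := by
    rw [← rpow_natCast ‖v‖ (n - 2), ← rpow_natCast ‖v‖ 2, ← rpow_mul (norm_nonneg v)]
    congr 1
    push_cast [Nat.cast_sub (by omega : 2 ≤ n), a]
    ring
  have key := Gamma_mul_integral_exp_neg_norm_sq_div_rpow ha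
    (by rwa [finrank_euclideanSpace_fin]) hx
  simp only [hpow] at key
  rw [div_mul_eq_mul_div, key, hdim]
  field_simp
end

section
/- The one-dimensional generating function η̃_{2M}(x) = π^{−1/2} L_{M−1}^{(1/2)}(x²) e^{−x²} satisfies the moment conditions: ∫_ℝ η̃_{2M}(x) dx = 1 and ∫_ℝ x^α η̃_{2M}(x) dx = 0 for all integers 1 ≤ α ≤ 2M − 1. -/
open Real MeasureTheory

/-- Generalized Laguerre polynomial via the Rodrigues formula
`L_k^(γ)(y) = (e^y y^(−γ)/k!) (d/dy)^k (e^(−y) y^(k+γ))`. -/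
noncomputable def laguerre (k : ℕ) (γ : ℝ) (y : ℝ) : ℝ :=
  (Real.exp y * y ^ (-γ) / (Nat.factorial k : ℝ)) *
    iteratedDeriv k (fun t : ℝ => Real.exp (-t) * t ^ ((k : ℝ) + γ)) y

/-- Normalized one-dimensional generating function
`η̃_{2M}(x) = π^(−1/2) L_{M−1}^{(1/2)}(x²) e^{−x²}`. -/
noncomputable def etaTildeNorm (M : ℕ) (x : ℝ) : ℝ :=
  π ^ (-(1:ℝ)/2) * laguerre (M - 1) (1/2) (x ^ 2) * Real.exp (-x ^ 2)

/-! With `k = M - 1` and `y = x²`, the even moment `∫ x^(2m) η̃_{2M}` equals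
`π^(-1/2) / k! · ∫₀^∞ y^(m-1) (d/dy)^k (e^(-y) y^(k+1/2)) dy`. Every derivative
`(d/dy)^j (e^(-y) y^c)` is `e^(-y) y^(c-j)` times a polynomial, so integrating by parts against
powers of `y` produces no boundary terms. For `1 ≤ m ≤ k`, `m` integrations by parts kill the
moment; for `m = 0`, `k` of them leave `k! ∫₀^∞ e^(-y) y^(-1/2) dy = k! √π`. Odd moments vanish
because `η̃_{2M}` is even. -/

open Filter Set Topology Polynomial
open scoped Nat

noncomputable def expNegRpow (c : ℝ) : ℝ → ℝ := fun t => Real.exp (-t) * t ^ c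

noncomputable def expNegRpowDerivFactor (a : ℝ) (P : ℝ[X]) : ℝ[X] :=
  C a * P + X * (derivative P - P)

lemma hasDerivAt_exp_neg_mul_rpow_mul_eval (a : ℝ) (P : ℝ[X]) {y : ℝ} (hy : 0 < y) :
    HasDerivAt (fun t => Real.exp (-t) * t ^ a * P.eval t)
      (Real.exp (-y) * y ^ (a - 1) * (expNegRpowDerivFactor a P).eval y) y := by
  have hexp : HasDerivAt (fun t => Real.exp (-t)) (-Real.exp (-y)) y := by
    simpa using (hasDerivAt_neg y).exp
  refine ((hexp.fun_mul (Real.hasDerivAt_rpow_const (Or.inl hy.ne'))).fun_mul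
    (P.hasDerivAt y)).congr_deriv ?_
  have hya : y ^ a = y ^ (a - 1) * y := by rw [← Real.rpow_add_one hy.ne']; ring_nf
  simp only [expNegRpowDerivFactor, eval_add, eval_mul, eval_C, eval_X, eval_sub]
  rw [hya]; ring

lemma exists_iteratedDeriv_expNegRpow_eq (c : ℝ) (j : ℕ) : ∃ P : ℝ[X], ∀ y, 0 < y →
    iteratedDeriv j (expNegRpow c) y = Real.exp (-y) * y ^ (c - j) * P.eval y := by
  induction j with
  | zero => exact ⟨1, fun y _ => by simp [expNegRpow]⟩
  | succ j ih =>
    obtain ⟨P, hP⟩ := ih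
    refine ⟨expNegRpowDerivFactor (c - j) P, fun y hy => ?_⟩
    have hEq : iteratedDeriv j (expNegRpow c) =ᶠ[𝓝 y]
        fun t => Real.exp (-t) * t ^ (c - j) * P.eval t :=
      eventually_of_mem (Ioi_mem_nhds hy) hP
    rw [iteratedDeriv_succ, hEq.deriv_eq,
      (hasDerivAt_exp_neg_mul_rpow_mul_eval (c - j) P hy).deriv]
    push_cast; ring_nf

lemma hasDerivAt_iteratedDeriv_expNegRpow (c : ℝ) (j : ℕ) {y : ℝ} (hy : 0 < y) :
    HasDerivAt (iteratedDeriv j (expNegRpow c)) (iteratedDeriv (j + 1) (expNegRpow c) y) y := by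
  obtain ⟨P, hP⟩ := exists_iteratedDeriv_expNegRpow_eq c j
  have hEq : iteratedDeriv j (expNegRpow c) =ᶠ[𝓝 y]
      fun t => Real.exp (-t) * t ^ (c - j) * P.eval t :=
    eventually_of_mem (Ioi_mem_nhds hy) hP
  rw [iteratedDeriv_succ]
  exact ((hasDerivAt_exp_neg_mul_rpow_mul_eval _ P hy).congr_of_eventuallyEq hEq)
    |>.differentiableAt.hasDerivAt

lemma exp_neg_mul_rpow_mul_eval_eq_sum (b : ℝ) (P : ℝ[X]) {y : ℝ} (hy : 0 < y) :
    Real.exp (-y) * y ^ b * P.eval y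
      = ∑ i ∈ Finset.range (P.natDegree + 1), P.coeff i * (Real.exp (-y) * y ^ (b + i)) := by
  rw [eval_eq_sum_range, Finset.mul_sum]
  refine Finset.sum_congr rfl fun i _ => ?_
  rw [Real.rpow_add hy, Real.rpow_natCast]; ring

lemma integrableOn_exp_neg_mul_rpow_mul_eval {b : ℝ} (hb : -1 < b) (P : ℝ[X]) :
    IntegrableOn (fun y => Real.exp (-y) * y ^ b * P.eval y) (Ioi 0) := by
  refine IntegrableOn.congr_fun (integrable_finsetSum _ fun i _ => ?_)
    (fun y hy => (exp_neg_mul_rpow_mul_eval_eq_sum b P hy).symm) measurableSet_Ioi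
  have hi : (0 : ℝ) < b + i + 1 := by linarith [(i.cast_nonneg : (0 : ℝ) ≤ i)]
  simpa using (Real.GammaIntegral_convergent hi).const_mul (P.coeff i)

lemma tendsto_exp_neg_mul_rpow_mul_eval_atTop (b : ℝ) (P : ℝ[X]) :
    Tendsto (fun y => Real.exp (-y) * y ^ b * P.eval y) atTop (𝓝 0) := by
  have hsum := tendsto_finsetSum (Finset.range (P.natDegree + 1)) fun i _ =>
    (tendsto_rpow_mul_exp_neg_mul_atTop_nhds_zero (b + i) 1 one_pos).const_mul (P.coeff i)
  simp only [mul_zero, Finset.sum_const_zero, neg_mul, one_mul] at hsum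
  refine hsum.congr' ?_
  filter_upwards [Ioi_mem_atTop 0] with y hy
  rw [exp_neg_mul_rpow_mul_eval_eq_sum b P hy]
  simp only [mul_comm (Real.exp _)]

lemma exists_rpow_mul_iteratedDeriv_expNegRpow_eq (c s : ℝ) (j : ℕ) : ∃ P : ℝ[X], ∀ y, 0 < y →
    y ^ s * iteratedDeriv j (expNegRpow c) y = Real.exp (-y) * y ^ (s + c - j) * P.eval y := by
  obtain ⟨P, hP⟩ := exists_iteratedDeriv_expNegRpow_eq c j
  refine ⟨P, fun y hy => ?_⟩
  rw [hP y hy, add_sub_assoc, Real.rpow_add hy]; ring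

lemma integrableOn_rpow_mul_iteratedDeriv_expNegRpow {c s : ℝ} {j : ℕ} (h : (j : ℝ) - 1 < s + c) :
    IntegrableOn (fun y => y ^ s * iteratedDeriv j (expNegRpow c) y) (Ioi 0) := by
  obtain ⟨P, hP⟩ := exists_rpow_mul_iteratedDeriv_expNegRpow_eq c s j
  exact (integrableOn_exp_neg_mul_rpow_mul_eval (by linarith) P).congr_fun
    (fun y hy => (hP y hy).symm) measurableSet_Ioi

lemma integral_rpow_mul_iteratedDeriv_succ_expNegRpow {c s : ℝ} {j : ℕ} (h : (j : ℝ) < s + c) :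
    ∫ y in Ioi 0, y ^ s * iteratedDeriv (j + 1) (expNegRpow c) y
      = -s * ∫ y in Ioi 0, y ^ (s - 1) * iteratedDeriv j (expNegRpow c) y := by
  obtain ⟨P, hP⟩ := exists_rpow_mul_iteratedDeriv_expNegRpow_eq c s j
  set G : ℝ → ℝ := fun y => Real.exp (-y) * y ^ (s + c - j) * P.eval y
  have hb : 0 < s + c - j := by linarith
  have hderiv : ∀ y ∈ Ioi (0 : ℝ), HasDerivAt G (y ^ s * iteratedDeriv (j + 1) (expNegRpow c) y
      + s * (y ^ (s - 1) * iteratedDeriv j (expNegRpow c) y)) y := by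
    intro y hy
    have hEq : (fun t => t ^ s * iteratedDeriv j (expNegRpow c) t) =ᶠ[𝓝 y] G :=
      eventually_of_mem (Ioi_mem_nhds hy) hP
    refine (((Real.hasDerivAt_rpow_const (p := s) (Or.inl hy.ne')).mul
      (hasDerivAt_iteratedDeriv_expNegRpow c j hy)).congr_of_eventuallyEq hEq.symm).congr_deriv ?_
    ring
  have hcont : ContinuousWithinAt G (Ici 0) 0 :=
    (((Real.continuous_exp.comp continuous_neg).continuousAt.mul
      (Real.continuousAt_rpow_const 0 _ (Or.inr hb.le))).mul
      P.continuous.continuousAt).continuousWithinAt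
  have hA := integrableOn_rpow_mul_iteratedDeriv_expNegRpow (c := c) (s := s) (j := j + 1)
    (by push_cast; linarith)
  have hB := integrableOn_rpow_mul_iteratedDeriv_expNegRpow (c := c) (s := s - 1) (j := j)
    (by linarith)
  have hftc := integral_Ioi_of_hasDerivAt_of_tendsto hcont hderiv (hA.add (hB.const_mul s))
    (tendsto_exp_neg_mul_rpow_mul_eval_atTop _ P)
  rw [integral_add hA (hB.const_mul s), integral_const_mul] at hftc
  have hG0 : G 0 = 0 := by simp [G, Real.zero_rpow hb.ne']
  linarith

lemma integral_natCast_rpow_mul_iteratedDeriv_expNegRpow_eq_zero {c : ℝ} {n j : ℕ} (hnj : n < j)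
    (hc : (j : ℝ) - 1 < c) :
    ∫ y in Ioi 0, y ^ (n : ℝ) * iteratedDeriv j (expNegRpow c) y = 0 := by
  induction n generalizing j with
  | zero =>
    obtain ⟨i, rfl⟩ : ∃ i, j = i + 1 := ⟨j - 1, by omega⟩
    rw [integral_rpow_mul_iteratedDeriv_succ_expNegRpow (by push_cast at hc; linarith)]
    simp
  | succ n ih =>
    obtain ⟨i, rfl⟩ : ∃ i, j = i + 1 := ⟨j - 1, by omega⟩
    have hi : (i : ℝ) - 1 < c := by push_cast at hc; linarith
    rw [integral_rpow_mul_iteratedDeriv_succ_expNegRpow (by push_cast; linarith),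
      Nat.cast_succ, add_sub_cancel_right, ih (by omega) hi, mul_zero]

lemma integral_rpow_mul_iteratedDeriv_expNegRpow_eq_descFactorial_mul_Gamma {γ : ℝ} (hγ : 0 < γ)
    {k j : ℕ} (hj : j ≤ k) :
    ∫ y in Ioi (0 : ℝ), y ^ ((j : ℝ) - k - 1) * iteratedDeriv j (expNegRpow (k + γ)) y
      = k.descFactorial j * Real.Gamma γ := by
  induction j with
  | zero =>
    rw [Nat.descFactorial_zero, Nat.cast_one, one_mul, Real.Gamma_eq_integral hγ]
    refine setIntegral_congr_fun measurableSet_Ioi fun y hy => ?_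
    simp only [iteratedDeriv_zero, expNegRpow]
    rw [mul_left_comm, ← Real.rpow_add hy]
    ring_nf
  | succ j ih =>
    rw [integral_rpow_mul_iteratedDeriv_succ_expNegRpow (by push_cast; linarith),
      show ((j + 1 : ℕ) : ℝ) - k - 1 - 1 = j - k - 1 by push_cast; ring, ih (by omega),
      Nat.descFactorial_succ, Nat.cast_mul, Nat.cast_sub (by omega)]
    push_cast; ring

lemma integral_pow_mul_eq_zero_of_odd {g : ℝ → ℝ} (hg : g.Even) {α : ℕ} (hα : Odd α) :
    ∫ x, x ^ α * g x = 0 := by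
  have h := integral_neg_eq_self (fun x => x ^ α * g x) volume
  simp only [hα.neg_pow, hg _, neg_mul, integral_neg] at h
  linarith

lemma integral_pow_two_mul_mul_comp_sq (g : ℝ → ℝ) (m : ℕ) :
    ∫ x, x ^ (2 * m) * g (x ^ 2) = ∫ y in Ioi 0, y ^ ((m : ℝ) - 1 / 2) * g y := by
  have hEven : (fun x : ℝ => x ^ (2 * m) * g (x ^ 2)) = fun x => |x| ^ (2 * m) * g (|x| ^ 2) := by
    simp only [sq_abs, (even_two_mul m).pow_abs]
  rw [hEven, integral_comp_abs (f := fun x => x ^ (2 * m) * g (x ^ 2)),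
    ← integral_comp_rpow_Ioi (fun y => y ^ ((m : ℝ) - 1 / 2) * g y) two_ne_zero,
    ← integral_const_mul]
  refine setIntegral_congr_fun measurableSet_Ioi fun x hx => ?_
  have hpow : x ^ ((2 : ℝ) - 1) * (x ^ 2) ^ ((m : ℝ) - 1 / 2) = x ^ (2 * m) := by
    rw [← Real.rpow_natCast x 2, ← Real.rpow_mul (le_of_lt hx), ← Real.rpow_add hx,
      ← Real.rpow_natCast]
    congr 1; push_cast; ring
  simp only [smul_eq_mul, abs_two, Real.rpow_two]
  rw [← hpow]; ring

lemma rpow_mul_laguerre_mul_exp_neg (k : ℕ) (γ a : ℝ) {y : ℝ} (hy : 0 < y) :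
    y ^ a * (laguerre k γ y * Real.exp (-y))
      = (k ! : ℝ)⁻¹ * (y ^ (a - γ) * iteratedDeriv k (expNegRpow (k + γ)) y) := by
  have hexp : Real.exp y * Real.exp (-y) = 1 := by
    rw [← Real.exp_add, add_neg_cancel, Real.exp_zero]
  rw [laguerre, sub_eq_add_neg, Real.rpow_add hy]
  change _ = _ * (_ * iteratedDeriv k (fun t => Real.exp (-t) * t ^ ((k : ℝ) + γ)) y)
  rw [div_eq_mul_inv]
  linear_combination (y ^ a * y ^ (-γ) * (k ! : ℝ)⁻¹ *
    iteratedDeriv k (fun t => Real.exp (-t) * t ^ ((k : ℝ) + γ)) y) * hexp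

lemma integral_pow_two_mul_mul_etaTildeNorm (M m : ℕ) :
    ∫ x, x ^ (2 * m) * etaTildeNorm M x = π ^ (-(1 : ℝ) / 2) * ((M - 1)! : ℝ)⁻¹ * ∫ y in Ioi 0,
      y ^ ((m : ℝ) - 1) * iteratedDeriv (M - 1) (expNegRpow ((M - 1 : ℕ) + 1 / 2)) y := by
  have hη : etaTildeNorm M = fun x =>
      (fun y => π ^ (-(1 : ℝ) / 2) * (laguerre (M - 1) (1 / 2) y * Real.exp (-y))) (x ^ 2) := by
    ext x; simp only [etaTildeNorm]; ring
  rw [hη, integral_pow_two_mul_mul_comp_sq, mul_assoc, ← integral_const_mul, ← integral_const_mul]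
  refine setIntegral_congr_fun measurableSet_Ioi fun y hy => ?_
  rw [mul_left_comm, rpow_mul_laguerre_mul_exp_neg _ _ _ hy,
    show (m : ℝ) - 1 / 2 - 1 / 2 = m - 1 by ring]

theorem etaTilde_moment_conditions_general (M : ℕ) :
    (∫ x : ℝ, etaTildeNorm M x) = 1 ∧
    ∀ α : ℕ, 1 ≤ α → α ≤ 2 * M - 1 → (∫ x : ℝ, x ^ α * etaTildeNorm M x) = 0 := by
  have hGamma := integral_rpow_mul_iteratedDeriv_expNegRpow_eq_descFactorial_mul_Gamma
    one_half_pos (le_refl (M - 1))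
  rw [sub_self, zero_sub, Nat.descFactorial_self, Real.Gamma_one_half_eq] at hGamma
  refine ⟨?_, fun α hα1 hα2 => ?_⟩
  · have h0 := integral_pow_two_mul_mul_etaTildeNorm M 0
    simp only [mul_zero, pow_zero, one_mul, Nat.cast_zero, zero_sub] at h0
    rw [h0, hGamma, Real.sqrt_eq_rpow, mul_assoc, inv_mul_cancel_left₀ (by positivity),
      ← Real.rpow_add pi_pos]
    norm_num
  rcases Nat.even_or_odd α with ⟨m, rfl⟩ | hodd
  · rw [← two_mul, integral_pow_two_mul_mul_etaTildeNorm,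
      show (m : ℝ) - 1 = (m - 1 : ℕ) by rw [Nat.cast_sub (by omega), Nat.cast_one],
      integral_natCast_rpow_mul_iteratedDeriv_expNegRpow_eq_zero (by omega) (by linarith), mul_zero]
  · exact integral_pow_mul_eq_zero_of_odd (fun x => by simp [etaTildeNorm]) hodd

theorem etaTilde_moment_conditions (M : ℕ) (hM : 1 ≤ M) :
    (∫ x : ℝ, etaTildeNorm M x) = 1 ∧
    ∀ α : ℕ, 1 ≤ α → α ≤ 2 * M - 1 → (∫ x : ℝ, x ^ α * etaTildeNorm M x) = 0 :=
  etaTilde_moment_conditions_general M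
end

section
/- For a > 0 and n ≥ 2, the function f(x) = (1/4)∫_0^∞ e^{−a²t/4} e^{−|x|²/(1+t)}/(1+t)^{n/2} dt satisfies −Δf(x) + a² f(x) = e^{−|x|²} for all x ∈ ℝⁿ. -/
open Real MeasureTheory

/-- The Laplacian on `ℝⁿ` as the sum of second derivatives along coordinate directions. -/
noncomputable def laplacian {n : ℕ} (f : EuclideanSpace ℝ (Fin n) → ℝ)
    (x : EuclideanSpace ℝ (Fin n)) : ℝ :=
  ∑ i : Fin n, iteratedDeriv 2 (fun t : ℝ => f (x + t • EuclideanSpace.single i (1:ℝ))) 0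

/-! With `k(c, t) = e^{-a²t/4} e^{-c/(1+t)} (1+t)^{-n/2}` the function is `f(y) = U(‖y‖²)` where
`U(c) = ¼ ∫₀^∞ k(c, t) dt`, so `Δf(x) = 4‖x‖² U''(‖x‖²) + 2n U'(‖x‖²)`. Differentiating under the
integral sign with `∂_c k = -k/(1+t)`, and using the identity
`4 ∂_t k = 4c ∂_c² k + 2n ∂_c k - a² k`, one gets
`Δf - a² f = ∫₀^∞ ∂_t k dt = -k(c, 0) = -e^{-c}` at `c = ‖x‖²`. -/

open Set Filter Topology

theorem iteratedDeriv_two_comp {𝕜 : Type*} [NontriviallyNormedField 𝕜] {U U' g g' : 𝕜 → 𝕜}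
    {U'' g'' x : 𝕜}
    (hU : ∀ᶠ y in 𝓝 (g x), HasDerivAt U (U' y) y) (hU' : HasDerivAt U' U'' (g x))
    (hg : ∀ᶠ y in 𝓝 x, HasDerivAt g (g' y) y) (hg' : HasDerivAt g' g'' x) :
    iteratedDeriv 2 (fun y => U (g y)) x = U'' * g' x ^ 2 + U' (g x) * g'' := by
  have hderiv : deriv (fun y => U (g y)) =ᶠ[𝓝 x] fun y => U' (g y) * g' y := by
    filter_upwards [hg.self_of_nhds.continuousAt.tendsto.eventually hU, hg] with y hUy hgy
    exact (hUy.comp y hgy).deriv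
  have hderiv' : HasDerivAt (fun y => U' (g y) * g' y) (U'' * g' x * g' x + U' (g x) * g'') x :=
    (hU'.comp x hg.self_of_nhds).mul hg'
  rw [iteratedDeriv_succ, iteratedDeriv_one, hderiv.deriv_eq, hderiv'.deriv]
  ring

theorem hasDerivAt_norm_sq_add_smul {E : Type*} [NormedAddCommGroup E] [InnerProductSpace ℝ E]
    (x v : E) (s : ℝ) :
    HasDerivAt (fun s : ℝ => ‖x + s • v‖ ^ 2) (2 * inner ℝ (x + s • v) v) s := by
  simpa using ((hasDerivAt_id s).smul_const v).const_add x |>.norm_sq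

theorem hasDerivAt_two_mul_inner_add_smul {E : Type*} [NormedAddCommGroup E]
    [InnerProductSpace ℝ E] (x v : E) (s : ℝ) :
    HasDerivAt (fun s : ℝ => 2 * inner ℝ (x + s • v) v) (2 * ‖v‖ ^ 2) s := by
  simpa [inner_add_left, real_inner_smul_left, real_inner_self_eq_norm_sq] using
    ((hasDerivAt_id s).mul_const (‖v‖ ^ 2)).const_add (inner ℝ x v) |>.const_mul 2

theorem laplacian_comp_norm_sq {n : ℕ} {U U' : ℝ → ℝ} {U'' : ℝ} (x : EuclideanSpace ℝ (Fin n))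
    (hU : ∀ᶠ c in 𝓝 (‖x‖ ^ 2), HasDerivAt U (U' c) c) (hU' : HasDerivAt U' U'' (‖x‖ ^ 2)) :
    laplacian (fun y => U (‖y‖ ^ 2)) x = 4 * ‖x‖ ^ 2 * U'' + 2 * n * U' (‖x‖ ^ 2) := by
  have hline (i : Fin n) :
      iteratedDeriv 2 (fun s : ℝ => U (‖x + s • EuclideanSpace.single i 1‖ ^ 2)) 0
        = U'' * (2 * x i) ^ 2 + U' (‖x‖ ^ 2) * 2 := by
    simpa [EuclideanSpace.inner_single_right] using
      iteratedDeriv_two_comp (g := fun s : ℝ => ‖x + s • EuclideanSpace.single i 1‖ ^ 2) (x := 0)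
        (by simpa using hU) (by simpa using hU')
        (Eventually.of_forall (hasDerivAt_norm_sq_add_smul x _))
        (hasDerivAt_two_mul_inner_add_smul x _ 0)
  simp only [laplacian, hline, Finset.sum_add_distrib, mul_pow, ← Finset.mul_sum,
    ← EuclideanSpace.real_norm_sq_eq, Finset.sum_const, Finset.card_univ, Fintype.card_fin,
    nsmul_eq_mul]
  ring

noncomputable def yukawaKernel (a : ℝ) (n : ℕ) (c t : ℝ) : ℝ :=
  exp (-a ^ 2 * t / 4) * exp (-c / (1 + t)) / (1 + t) ^ ((n : ℝ) / 2)

noncomputable def yukawaMoment (a : ℝ) (n m : ℕ) (c : ℝ) : ℝ :=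
  ∫ t in Ioi 0, yukawaKernel a n c t / (1 + t) ^ m

section
variable {a : ℝ} {n : ℕ}

theorem yukawaMoment_zero (c : ℝ) :
    yukawaMoment a n 0 c = ∫ t in Ioi 0, yukawaKernel a n c t := by
  simp [yukawaMoment]

theorem yukawaKernel_zero_right (c : ℝ) : yukawaKernel a n c 0 = exp (-c) := by
  simp [yukawaKernel]

theorem norm_yukawaKernel_div_pow_le (m : ℕ) {c t : ℝ} (hc : -1 ≤ c) (ht : 0 ≤ t) :
    ‖yukawaKernel a n c t / (1 + t) ^ m‖ ≤ exp 1 * exp (-(a ^ 2 / 4) * t) := by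
  have h1t : 1 ≤ 1 + t := by linarith
  have hexp : exp (-c / (1 + t)) ≤ exp 1 :=
    exp_le_exp.mpr ((div_le_one (by positivity)).mpr (by linarith))
  have hden : 1 ≤ (1 + t) ^ ((n : ℝ) / 2) * (1 + t) ^ m :=
    one_le_mul_of_one_le_of_one_le (one_le_rpow h1t (by positivity)) (one_le_pow₀ h1t)
  rw [Real.norm_of_nonneg (by unfold yukawaKernel; positivity), yukawaKernel, div_div]
  calc exp (-a ^ 2 * t / 4) * exp (-c / (1 + t)) / ((1 + t) ^ ((n : ℝ) / 2) * (1 + t) ^ m)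
      ≤ exp (-a ^ 2 * t / 4) * exp (-c / (1 + t)) := div_le_self (by positivity) hden
    _ ≤ exp 1 * exp (-(a ^ 2 / 4) * t) := by
      rw [mul_comm, show -a ^ 2 * t / 4 = -(a ^ 2 / 4) * t by ring]
      gcongr

theorem measurable_yukawaKernel_div_pow (m : ℕ) (c : ℝ) :
    Measurable (fun t => yukawaKernel a n c t / (1 + t) ^ m) := by
  unfold yukawaKernel
  fun_prop

theorem integrableOn_yukawaKernel_div_pow (ha : a ≠ 0) (m : ℕ) {c : ℝ} (hc : -1 ≤ c) :
    IntegrableOn (fun t => yukawaKernel a n c t / (1 + t) ^ m) (Ioi 0) := by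
  refine Integrable.mono'
    ((exp_neg_integrableOn_Ioi 0 (b := a ^ 2 / 4) (by positivity)).const_mul (exp 1))
    (measurable_yukawaKernel_div_pow m c).aestronglyMeasurable ?_
  filter_upwards [self_mem_ae_restrict measurableSet_Ioi] with t ht
  exact norm_yukawaKernel_div_pow_le m hc (le_of_lt ht)

theorem hasDerivAt_yukawaKernel_div_pow (m : ℕ) (c t : ℝ) :
    HasDerivAt (fun c => yukawaKernel a n c t / (1 + t) ^ m)
      (-(yukawaKernel a n c t / (1 + t) ^ (m + 1))) c := by
  have hlin : HasDerivAt (fun c : ℝ => -c / (1 + t)) (-1 / (1 + t)) c :=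
    (hasDerivAt_id c).neg.div_const (1 + t)
  refine (((hlin.exp.const_mul (exp (-a ^ 2 * t / 4))).div_const
    ((1 + t) ^ ((n : ℝ) / 2))).div_const ((1 + t) ^ m)).congr_deriv ?_
  rw [yukawaKernel, pow_succ (1 + t) m, ← div_div]
  ring

theorem hasDerivAt_yukawaMoment (ha : a ≠ 0) (m : ℕ) {c : ℝ} (hc : -1 < c) :
    HasDerivAt (yukawaMoment a n m) (-yukawaMoment a n (m + 1) c) c := by
  have hbound : ∀ᵐ t ∂(volume.restrict (Ioi 0)), ∀ c ∈ Ioi (-1 : ℝ),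
      ‖-(yukawaKernel a n c t / (1 + t) ^ (m + 1))‖ ≤ exp 1 * exp (-(a ^ 2 / 4) * t) := by
    filter_upwards [self_mem_ae_restrict measurableSet_Ioi] with t ht c hc
    rw [norm_neg]
    exact norm_yukawaKernel_div_pow_le (m + 1) (le_of_lt hc) (le_of_lt ht)
  have h := hasDerivAt_integral_of_dominated_loc_of_deriv_le (isOpen_Ioi.mem_nhds hc)
    (Eventually.of_forall fun c => (measurable_yukawaKernel_div_pow m c).aestronglyMeasurable)
    (integrableOn_yukawaKernel_div_pow ha m hc.le)
    (measurable_yukawaKernel_div_pow (m + 1) c).neg.aestronglyMeasurable hbound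
    ((exp_neg_integrableOn_Ioi 0 (b := a ^ 2 / 4) (by positivity)).const_mul (exp 1))
    (Eventually.of_forall fun t c _ => hasDerivAt_yukawaKernel_div_pow m c t)
  unfold yukawaMoment
  simpa only [integral_neg] using h.2

theorem hasDerivAt_yukawaKernel_right (c : ℝ) {t : ℝ} (ht : -1 < t) :
    HasDerivAt (yukawaKernel a n c)
      (yukawaKernel a n c t * (c / (1 + t) ^ 2 - n / 2 / (1 + t) - a ^ 2 / 4)) t := by
  have h1t : 0 < 1 + t := by linarith
  have hone : HasDerivAt (fun t : ℝ => 1 + t) 1 t := (hasDerivAt_id t).const_add 1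
  have hA : HasDerivAt (fun t : ℝ => exp (-a ^ 2 * t / 4))
      (exp (-a ^ 2 * t / 4) * (-a ^ 2 / 4)) t :=
    (((hasDerivAt_id' t).const_mul (-a ^ 2)).div_const 4).exp.congr_deriv (by ring)
  have hB : HasDerivAt (fun t : ℝ => exp (-c / (1 + t)))
      (exp (-c / (1 + t)) * (c / (1 + t) ^ 2)) t := by
    refine (((hasDerivAt_const t (-c)).fun_div hone h1t.ne').exp).congr_deriv ?_
    ring
  have hC : HasDerivAt (fun t : ℝ => (1 + t) ^ ((n : ℝ) / 2))
      (1 * ((n : ℝ) / 2) * (1 + t) ^ ((n : ℝ) / 2 - 1)) t :=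
    hone.rpow_const (Or.inl h1t.ne')
  refine ((hA.fun_mul hB).fun_div hC (rpow_pos_of_pos h1t _).ne').congr_deriv ?_
  rw [rpow_sub h1t, rpow_one, yukawaKernel]
  field_simp
  ring

theorem tendsto_yukawaKernel_atTop (ha : a ≠ 0) {c : ℝ} (hc : -1 ≤ c) :
    Tendsto (yukawaKernel a n c) atTop (𝓝 0) := by
  have hdecay : Tendsto (fun t : ℝ => exp 1 * exp (-(a ^ 2 / 4) * t)) atTop (𝓝 0) := by
    have : Tendsto (fun t : ℝ => -(a ^ 2 / 4) * t) atTop atBot :=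
      tendsto_id.const_mul_atTop_of_neg (neg_neg_of_pos (by positivity))
    simpa using (tendsto_exp_atBot.comp this).const_mul (exp 1)
  refine squeeze_zero_norm' ?_ hdecay
  filter_upwards [eventually_ge_atTop 0] with t ht
  simpa using norm_yukawaKernel_div_pow_le (a := a) (n := n) 0 hc ht

theorem yukawaMoment_combination_eq_neg_exp (ha : a ≠ 0) {c : ℝ} (hc : -1 ≤ c) :
    c * yukawaMoment a n 2 c - n / 2 * yukawaMoment a n 1 c - a ^ 2 / 4 * yukawaMoment a n 0 c
      = -exp (-c) := by
  have hint (m : ℕ) := integrableOn_yukawaKernel_div_pow (n := n) ha m hc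
  have hderiv : ∀ t ∈ Ici (0 : ℝ), HasDerivAt (yukawaKernel a n c)
      (c * (yukawaKernel a n c t / (1 + t) ^ 2) - n / 2 * (yukawaKernel a n c t / (1 + t) ^ 1)
        - a ^ 2 / 4 * (yukawaKernel a n c t / (1 + t) ^ 0)) t := fun t ht =>
    (hasDerivAt_yukawaKernel_right c (by linarith [mem_Ici.mp ht])).congr_deriv (by ring)
  have hftc := integral_Ioi_of_hasDerivAt_of_tendsto' hderiv
    ((((hint 2).const_mul c).sub' ((hint 1).const_mul _)).sub' ((hint 0).const_mul _))
    (tendsto_yukawaKernel_atTop ha hc)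
  rw [integral_sub (((hint 2).const_mul c).sub' ((hint 1).const_mul _)) ((hint 0).const_mul _),
    integral_sub ((hint 2).const_mul c) ((hint 1).const_mul _), integral_const_mul,
    integral_const_mul, integral_const_mul, yukawaKernel_zero_right, zero_sub] at hftc
  exact hftc

end

theorem yukawa_gaussian_integral_solution_general (n : ℕ) (a : ℝ) (ha : 0 < a)
    (x : EuclideanSpace ℝ (Fin n)) :
    -laplacian (fun y : EuclideanSpace ℝ (Fin n) =>
        (1 / 4) * ∫ t in Set.Ioi (0:ℝ),
          Real.exp (-a ^ 2 * t / 4) * Real.exp (-‖y‖ ^ 2 / (1 + t)) /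
            (1 + t) ^ ((n : ℝ) / 2)) x +
      a ^ 2 * ((1 / 4) * ∫ t in Set.Ioi (0:ℝ),
          Real.exp (-a ^ 2 * t / 4) * Real.exp (-‖x‖ ^ 2 / (1 + t)) /
            (1 + t) ^ ((n : ℝ) / 2)) =
      Real.exp (-‖x‖ ^ 2) := by
  have hx : -1 < ‖x‖ ^ 2 := by linarith [sq_nonneg ‖x‖]
  have hprofile (y : EuclideanSpace ℝ (Fin n)) :
      (1 / 4) * ∫ t in Ioi (0 : ℝ), exp (-a ^ 2 * t / 4) * exp (-‖y‖ ^ 2 / (1 + t)) /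
        (1 + t) ^ ((n : ℝ) / 2) = (1 / 4) * yukawaMoment a n 0 (‖y‖ ^ 2) := by
    rw [yukawaMoment_zero]
    rfl
  have hlap := laplacian_comp_norm_sq x (U := fun c => 1 / 4 * yukawaMoment a n 0 c)
    (U' := fun c => 1 / 4 * -yukawaMoment a n 1 c) (U'' := 1 / 4 * yukawaMoment a n 2 (‖x‖ ^ 2))
    (by filter_upwards [isOpen_Ioi.mem_nhds hx] with c hc
        using (hasDerivAt_yukawaMoment ha.ne' 0 hc).const_mul _)
    ((hasDerivAt_yukawaMoment ha.ne' 1 hx).neg.const_mul _ |>.congr_deriv (by ring))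
  simp only [hprofile, hlap]
  linear_combination -yukawaMoment_combination_eq_neg_exp (n := n) ha.ne' hx.le

theorem yukawa_gaussian_integral_solution (n : ℕ) (hn : 2 ≤ n) (a : ℝ) (ha : 0 < a)
    (x : EuclideanSpace ℝ (Fin n)) :
    -laplacian (fun y : EuclideanSpace ℝ (Fin n) =>
        (1 / 4) * ∫ t in Set.Ioi (0:ℝ),
          Real.exp (-a ^ 2 * t / 4) * Real.exp (-‖y‖ ^ 2 / (1 + t)) /
            (1 + t) ^ ((n : ℝ) / 2)) x +
      a ^ 2 * ((1 / 4) * ∫ t in Set.Ioi (0:ℝ),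
          Real.exp (-a ^ 2 * t / 4) * Real.exp (-‖x‖ ^ 2 / (1 + t)) /
            (1 + t) ^ ((n : ℝ) / 2)) =
      Real.exp (-‖x‖ ^ 2) :=
  yukawa_gaussian_integral_solution_general n a ha x
end
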